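/- Let V be a finite vector space, G ≤ GL(V) an irreducible subgroup that is IBIS on V \ {0} with b(G) = 2, and suppose V = W_1 ⊕ ⋯ ⊕ W_n (n ≥ 2) is a direct sum decomposition whose summands are permuted transitively by G (an imprimitivity decomposition V ≅ W^n). Then the setwise stabilizer H of W_1 in G acts transitively on W_1 \ {0}. -/
import Mathlib


section IBIS
variable {G : Type*} [Group G] {Ω : Type*} [MulAction G Ω]

/-- A list of points of `S ⊆ Ω` is irredundant for the subgroup `H ≤ G` if no entry is
fixed by the pointwise stabilizer of its predecessors. -/
def IsIrredundantOn (H : Subgroup G) (S : Set Ω) (l : List Ω) : Prop :=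
  (∀ x ∈ l, x ∈ S) ∧
  ∀ (i : ℕ) (hi : i < l.length), ∃ g ∈ H,
    (∀ x ∈ l.take i, g • x = x) ∧ g • l.get ⟨i, hi⟩ ≠ l.get ⟨i, hi⟩

/-- An irredundant base: an irredundant list whose pointwise stabilizer in `H` is trivial. -/
def IsIrredundantBaseOn (H : Subgroup G) (S : Set Ω) (l : List Ω) : Prop :=
  IsIrredundantOn H S l ∧ ∀ g ∈ H, (∀ x ∈ l, g • x = x) → g = 1

/-- `H` is IBIS on `S` if all its irredundant bases have the same cardinality. -/
def IsIBISOn (H : Subgroup G) (S : Set Ω) : Prop :=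
  ∀ l₁ l₂ : List Ω, IsIrredundantBaseOn H S l₁ → IsIrredundantBaseOn H S l₂ →
    l₁.length = l₂.length

/-- The minimal size of a base for the action of `H` on `S`. -/
noncomputable def baseSizeOn (H : Subgroup G) (S : Set Ω) : ℕ :=
  sInf {k | ∃ l : List Ω, l.length = k ∧ (∀ x ∈ l, x ∈ S) ∧
    ∀ g ∈ H, (∀ x ∈ l, g • x = x) → g = 1}

end IBIS

section AuxProof

variable {F V : Type*} [Field F] [AddCommGroup V] [Module F V] [Finite V]

private lemma finite_linEquiv : Finite (V ≃ₗ[F] V) :=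
  Finite.of_injective (fun g => (g : V → V)) DFunLike.coe_injective

private lemma linEquiv_eq_one (g : V ≃ₗ[F] V) (h : ∀ x : V, g • x = x) : g = 1 :=
  LinearEquiv.ext fun x => h x

/-- any irredundant list extends to an irredundant base -/
private lemma exists_extension (G : Subgroup (V ≃ₗ[F] V)) :
    ∀ l : List V, IsIrredundantOn G {v : V | v ≠ 0} l →
      ∃ l', l <+: l' ∧ IsIrredundantBaseOn G {v : V | v ≠ 0} l' := by
  haveI : Finite (V ≃ₗ[F] V) := finite_linEquiv
  suffices h : ∀ (N : ℕ) (l : List V),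
      {g : V ≃ₗ[F] V | g ∈ G ∧ ∀ x ∈ l, g • x = x}.ncard ≤ N →
      IsIrredundantOn G {v : V | v ≠ 0} l →
      ∃ l', l <+: l' ∧ IsIrredundantBaseOn G {v : V | v ≠ 0} l' by
    intro l hl
    exact h _ l le_rfl hl
  intro N
  induction N with
  | zero =>
    intro l hcard _
    exfalso
    have h1 : (1 : V ≃ₗ[F] V) ∈ {g : V ≃ₗ[F] V | g ∈ G ∧ ∀ x ∈ l, g • x = x} :=
      ⟨one_mem G, fun x _ => one_smul _ x⟩
    have hfin : {g : V ≃ₗ[F] V | g ∈ G ∧ ∀ x ∈ l, g • x = x}.Finite := Set.toFinite _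
    have : 0 < {g : V ≃ₗ[F] V | g ∈ G ∧ ∀ x ∈ l, g • x = x}.ncard :=
      (Set.ncard_pos hfin).mpr ⟨1, h1⟩
    omega
  | succ N ih =>
    intro l hcard hl
    by_cases htriv : ∀ g ∈ G, (∀ x ∈ l, g • x = x) → g = 1
    · exact ⟨l, List.prefix_refl l, hl, htriv⟩
    push_neg at htriv
    obtain ⟨g₀, hg₀G, hg₀fix, hg₀1⟩ := htriv
    have hz : ∃ z : V, g₀ • z ≠ z := by
      by_contra hc
      push_neg at hc
      exact hg₀1 (linEquiv_eq_one g₀ hc)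
    obtain ⟨z, hz⟩ := hz
    have hz0 : z ≠ 0 := by
      rintro rfl
      exact hz (smul_zero g₀)
    have hirr' : IsIrredundantOn G {v : V | v ≠ 0} (l ++ [z]) := by
      constructor
      · intro x hx
        rcases List.mem_append.mp hx with hx | hx
        · exact hl.1 x hx
        · simpa using (List.mem_singleton.mp hx) ▸ hz0
      · intro i hi
        have hlen : (l ++ [z]).length = l.length + 1 := by simp
        rcases lt_or_eq_of_le (Nat.le_of_lt_succ (hlen ▸ hi)) with hlt | heq
        · obtain ⟨g, hgG, hgfix, hgmove⟩ := hl.2 i hlt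
          refine ⟨g, hgG, ?_, ?_⟩
          · intro x hx
            apply hgfix
            rwa [List.take_append_of_le_length (Nat.le_of_lt hlt)] at hx
          · have : (l ++ [z]).get ⟨i, hi⟩ = l.get ⟨i, hlt⟩ := by
              simp only [List.get_eq_getElem]
              exact List.getElem_append_left hlt
            rw [this]
            exact hgmove
        · refine ⟨g₀, hg₀G, ?_, ?_⟩
          · intro x hx
            apply hg₀fix
            rw [heq, List.take_left] at hx
            exact hx
          · have : (l ++ [z]).get ⟨i, hi⟩ = z := by
              subst heq
              simp [List.get_eq_getElem]
            rw [this]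
            exact hz
    have hsub : {g : V ≃ₗ[F] V | g ∈ G ∧ ∀ x ∈ l ++ [z], g • x = x} ⊂
        {g : V ≃ₗ[F] V | g ∈ G ∧ ∀ x ∈ l, g • x = x} := by
      constructor
      · rintro g ⟨hgG, hgfix⟩
        exact ⟨hgG, fun x hx => hgfix x (List.mem_append.mpr (Or.inl hx))⟩
      · intro hle
        have := hle ⟨hg₀G, hg₀fix⟩
        exact hz (this.2 z (List.mem_append.mpr (Or.inr (List.mem_singleton.mpr rfl))))
    have hlt : {g : V ≃ₗ[F] V | g ∈ G ∧ ∀ x ∈ l ++ [z], g • x = x}.ncard ≤ N := by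
      have := Set.ncard_lt_ncard hsub (Set.toFinite _)
      omega
    obtain ⟨l', hpre, hbase⟩ := ih (l ++ [z]) hlt hirr'
    exact ⟨l', (List.prefix_append l [z]).trans hpre, hbase⟩

private lemma component_eq_zero {n : ℕ} (W : Fin n → Submodule F V)
    (hind : iSupIndep W) (f : Fin n → V) (hf : ∀ k, f k ∈ W k)
    (hsum : ∑ k, f k = 0) : ∀ k, f k = 0 := by
  intro k
  have h1 : f k + ∑ l ∈ Finset.univ.erase k, f l = 0 := by
    rwa [Finset.add_sum_erase _ f (Finset.mem_univ k)]
  have h2 : f k = -∑ l ∈ Finset.univ.erase k, f l := eq_neg_of_add_eq_zero_left h1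
  have h3 : f k ∈ ⨆ (l) (_ : l ≠ k), W l := by
    rw [h2]
    refine neg_mem (Submodule.sum_mem _ fun l hl => ?_)
    exact Submodule.mem_iSup_of_mem l (Submodule.mem_iSup_of_mem (Finset.ne_of_mem_erase hl)
      (hf l))
  exact (Submodule.disjoint_def.mp (hind k)) (f k) (hf k) h3

private lemma swap_lemma (G : Subgroup (V ≃ₗ[F] V)) {n : ℕ} (W : Fin n → Submodule F V)
    (hind : iSupIndep W)
    (hperm : ∀ g ∈ G, ∀ i, ∃ j, (W i).map (g : V →ₗ[F] V) = W j)
    {i j : Fin n} (hij : i ≠ j) {u w : V} (hu : u ∈ W i) (hu0 : u ≠ 0)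
    (hw : w ∈ W j) (hw0 : w ≠ 0)
    (hpair : ∀ g ∈ G, g • u = u → g • w = w → g = 1)
    (g : V ≃ₗ[F] V) (hgG : g ∈ G) (hg1 : g ≠ 1) (hfix : g • (u + w) = u + w) :
    g • u = w ∧ g • w = u := by
  classical
  have hdisj : ∀ (k l : Fin n), k ≠ l → ∀ x : V, x ∈ W k → x ∈ W l → x = 0 := by
    intro k l hkl x h1 h2
    exact Submodule.disjoint_def.mp (hind.pairwiseDisjoint hkl) x h1 h2
  obtain ⟨a, ha⟩ := hperm g hgG i
  obtain ⟨b, hb⟩ := hperm g hgG j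
  have hgu : g • u ∈ W a := by
    rw [← ha]
    exact ⟨u, hu, rfl⟩
  have hgw : g • w ∈ W b := by
    rw [← hb]
    exact ⟨w, hw, rfl⟩
  have hgu0 : g • u ≠ 0 := by
    intro h
    exact hu0 (by simpa using g.map_eq_zero_iff.mp h)
  have hgw0 : g • w ≠ 0 := by
    intro h
    exact hw0 (by simpa using g.map_eq_zero_iff.mp h)
  have hab : a ≠ b := by
    rintro rfl
    have hinj : Function.Injective (g : V →ₗ[F] V) := g.injective
    have hWeq : W i = W j := Submodule.map_injective_of_injective hinj (ha.trans hb.symm)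
    exact hu0 (hdisj i j hij u hu (hWeq ▸ hu))
  set f : Fin n → V := fun k =>
    (if k = i then u else 0) + (if k = j then w else 0) +
    (if k = a then -(g • u) else 0) + (if k = b then -(g • w) else 0) with hf_def
  have hfmem : ∀ k, f k ∈ W k := by
    intro k
    refine add_mem (add_mem (add_mem ?_ ?_) ?_) ?_
    · split_ifs with h
      · exact h ▸ hu
      · exact zero_mem _
    · split_ifs with h
      · exact h ▸ hw
      · exact zero_mem _
    · split_ifs with h
      · exact h ▸ neg_mem hgu
      · exact zero_mem _
    · split_ifs with h
      · exact h ▸ neg_mem hgw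
      · exact zero_mem _
  have hsum : ∑ k, f k = 0 := by
    have hgsum : g • u + g • w = u + w := by rw [← smul_add, hfix]
    have : ∑ k, f k = u + w + -(g • u) + -(g • w) := by
      rw [hf_def]
      simp only [Finset.sum_add_distrib, Finset.sum_ite_eq', Finset.mem_univ, if_true]
    rw [this, ← hgsum]
    abel
  have hcomp := component_eq_zero W hind f hfmem hsum
  have hai : a = i ∨ a = j := by
    by_contra hc
    push_neg at hc
    have e : f a = -(g • u) := by
      simp [hf_def, hc.1, hc.2, hab]
    have h := hcomp a
    rw [e] at h
    exact hgu0 (neg_eq_zero.mp h)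
  have hbi : b = i ∨ b = j := by
    by_contra hc
    push_neg at hc
    have e : f b = -(g • w) := by
      simp [hf_def, hc.1, hc.2, Ne.symm hab]
    have h := hcomp b
    rw [e] at h
    exact hgw0 (neg_eq_zero.mp h)
  rcases hai with hai | hai
  · -- a = i, so b = j, whence g fixes u and w: contradiction
    exfalso
    have hbj : b = j := by
      rcases hbi with hbi | hbi
      · exact absurd (hai.trans hbi.symm) hab
      · exact hbi
    have e1 : f i = u + -(g • u) := by
      simp [hf_def, hai, hbj, hij]
    have e2 : f j = w + -(g • w) := by
      simp [hf_def, hai, hbj, Ne.symm hij]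
    have h1 := hcomp i
    rw [e1] at h1
    have h2 := hcomp j
    rw [e2] at h2
    have hgu_eq : g • u = u := by
      have h' : u - g • u = 0 := by rwa [sub_eq_add_neg]
      exact (sub_eq_zero.mp h').symm
    have hgw_eq : g • w = w := by
      have h' : w - g • w = 0 := by rwa [sub_eq_add_neg]
      exact (sub_eq_zero.mp h').symm
    exact hg1 (hpair g hgG hgu_eq hgw_eq)
  · -- a = j, so b = i, whence g swaps u and w
    have hbi' : b = i := by
      rcases hbi with hbi | hbi
      · exact hbi
      · exact absurd (hai.trans hbi.symm) hab
    have e1 : f i = u + -(g • w) := by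
      simp [hf_def, hai, hbi', hij]
    have e2 : f j = w + -(g • u) := by
      simp [hf_def, hai, hbi', Ne.symm hij]
    have h1 := hcomp i
    rw [e1] at h1
    have h2 := hcomp j
    rw [e2] at h2
    constructor
    · have h' : w - g • u = 0 := by rwa [sub_eq_add_neg]
      exact (sub_eq_zero.mp h').symm
    · have h' : u - g • w = 0 := by rwa [sub_eq_add_neg]
      exact (sub_eq_zero.mp h').symm

end AuxProof

/-- Proposition 4.1: if `G ≤ GL(V)` is an irreducible IBIS group with `b(G) = 2` and
`V = W₁ ⊕ ⋯ ⊕ W_n` is an imprimitivity decomposition whose nonzero summands are permuted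
transitively by `G`, then the setwise stabilizer of `W₁` in `G` acts transitively
on `W₁ \ {0}`. -/
theorem imprimitive_isIBIS_baseSize_two_stabilizer_transitive
    {F V : Type*} [Field F] [AddCommGroup V] [Module F V] [Finite V]
    (G : Subgroup (V ≃ₗ[F] V))
    (hirr : ∀ W : Submodule F V, (∀ g ∈ G, ∀ w ∈ W, g • w ∈ W) → W = ⊥ ∨ W = ⊤)
    (hIBIS : IsIBISOn G {v : V | v ≠ 0})
    (hb : baseSizeOn G {v : V | v ≠ 0} = 2)
    (n : ℕ) (hn : 2 ≤ n) (W : Fin n → Submodule F V)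
    (hW0 : ∀ i, W i ≠ ⊥)
    (hint : DirectSum.IsInternal W)
    (hperm : ∀ g ∈ G, ∀ i, ∃ j, (W i).map (g : V →ₗ[F] V) = W j)
    (htrans : ∀ i j, ∃ g ∈ G, (W i).map (g : V →ₗ[F] V) = W j) :
    ∀ i₀ : Fin n, ∀ u v : V, u ∈ W i₀ → u ≠ 0 → v ∈ W i₀ → v ≠ 0 →
      ∃ g ∈ G, (W i₀).map (g : V →ₗ[F] V) = W i₀ ∧ g • u = v := by
  classical
  haveI : Finite (V ≃ₗ[F] V) := finite_linEquiv
  intro i₀ u v hu hu0 hv hv0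
  have hind : iSupIndep W := hint.submodule_iSupIndep
  have hdisj : ∀ (k l : Fin n), k ≠ l → ∀ x : V, x ∈ W k → x ∈ W l → x = 0 := by
    intro k l hkl x h1 h2
    exact Submodule.disjoint_def.mp (hind.pairwiseDisjoint hkl) x h1 h2
  -- The base-size set
  have hBne : {k | ∃ l : List V, l.length = k ∧ (∀ x ∈ l, x ∈ {v : V | v ≠ 0}) ∧
      ∀ g ∈ G, (∀ x ∈ l, g • x = x) → g = 1}.Nonempty := by
    haveI := Fintype.ofFinite V
    refine ⟨_, (Finset.univ.filter fun x : V => x ≠ 0).toList, rfl, ?_, ?_⟩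
    · intro x hx
      have := Finset.mem_filter.mp (Finset.mem_toList.mp hx)
      exact this.2
    · intro g _ hfix
      apply linEquiv_eq_one
      intro x
      by_cases hx : x = 0
      · rw [hx, smul_zero]
      · exact hfix x (Finset.mem_toList.mpr (Finset.mem_filter.mpr ⟨Finset.mem_univ x, hx⟩))
  have hInf : sInf {k | ∃ l : List V, l.length = k ∧ (∀ x ∈ l, x ∈ {v : V | v ≠ 0}) ∧
      ∀ g ∈ G, (∀ x ∈ l, g • x = x) → g = 1} = 2 := hb
  have hBge : ∀ k ∈ {k | ∃ l : List V, l.length = k ∧ (∀ x ∈ l, x ∈ {v : V | v ≠ 0}) ∧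
      ∀ g ∈ G, (∀ x ∈ l, g • x = x) → g = 1}, 2 ≤ k := by
    intro k hk
    have := Nat.sInf_le hk
    omega
  -- irreducibility: every nonzero vector is moved by some element of G
  have hmove : ∀ x : V, x ≠ 0 → ∃ g ∈ G, g • x ≠ x := by
    intro x hx
    by_contra hc
    push_neg at hc
    let U : Submodule F V :=
      { carrier := {y | ∀ g ∈ G, g • y = y}
        add_mem' := fun {y z} hy hz g hg => by rw [smul_add, hy g hg, hz g hg]
        zero_mem' := fun g _ => smul_zero g
        smul_mem' := fun c y hy g hg => by
          have : g • (c • y) = c • (g • y) := by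
            show g (c • y) = c • (g y)
            exact map_smul g c y
          rw [this, hy g hg] }
    have hstable : ∀ g ∈ G, ∀ w ∈ U, g • w ∈ U := by
      intro g hg w hw
      have : g • w = w := hw g hg
      rw [this]
      exact hw
    rcases hirr U hstable with hU | hU
    · have : x ∈ U := fun g hg => hc g hg
      rw [hU] at this
      exact hx this
    · have h0 : (0 : ℕ) ∈ {k | ∃ l : List V, l.length = k ∧
          (∀ x ∈ l, x ∈ {v : V | v ≠ 0}) ∧ ∀ g ∈ G, (∀ x ∈ l, g • x = x) → g = 1} := by
        refine ⟨[], rfl, by simp, ?_⟩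
        intro g hg _
        apply linEquiv_eq_one
        intro y
        have : y ∈ U := hU ▸ Submodule.mem_top
        exact this g hg
      have := hBge 0 h0
      omega
  -- stabilizers of nonzero vectors are nontrivial
  have hstab1 : ∀ x : V, x ≠ 0 → ∃ g ∈ G, g ≠ 1 ∧ g • x = x := by
    intro x hx
    by_contra hc
    push_neg at hc
    have h1 : (1 : ℕ) ∈ {k | ∃ l : List V, l.length = k ∧
        (∀ x ∈ l, x ∈ {v : V | v ≠ 0}) ∧ ∀ g ∈ G, (∀ x ∈ l, g • x = x) → g = 1} := by
      refine ⟨[x], rfl, by simpa using hx, ?_⟩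
      intro g hg hfix
      by_contra hg1
      exact (hc g hg hg1) (hfix x (List.mem_singleton.mpr rfl))
    have := hBge 1 h1
    omega
  -- a length-2 irredundant base exists
  have h2mem : (2 : ℕ) ∈ {k | ∃ l : List V, l.length = k ∧
      (∀ x ∈ l, x ∈ {v : V | v ≠ 0}) ∧ ∀ g ∈ G, (∀ x ∈ l, g • x = x) → g = 1} :=
    hInf ▸ Nat.sInf_mem hBne
  obtain ⟨l2, hlen2, hl2S, hl2triv⟩ := h2mem
  obtain ⟨a, b, rfl⟩ := List.length_eq_two.mp hlen2
  have ha0 : a ≠ 0 := hl2S a (by simp)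
  have hb0 : b ≠ 0 := hl2S b (by simp)
  have hbase2 : IsIrredundantBaseOn G {v : V | v ≠ 0} [a, b] := by
    refine ⟨⟨hl2S, ?_⟩, hl2triv⟩
    intro i hi
    simp only [List.length_cons, List.length_nil] at hi
    interval_cases i
    · obtain ⟨g, hgG, hgmove⟩ := hmove a ha0
      exact ⟨g, hgG, by simp, by simpa using hgmove⟩
    · by_cases hfix : ∃ g ∈ G, g • a = a ∧ g • b ≠ b
      · obtain ⟨g, hgG, hga, hgb⟩ := hfix
        exact ⟨g, hgG, by simpa using hga, by simpa using hgb⟩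
      · exfalso
        push_neg at hfix
        have h1 : (1 : ℕ) ∈ {k | ∃ l : List V, l.length = k ∧
            (∀ x ∈ l, x ∈ {v : V | v ≠ 0}) ∧ ∀ g ∈ G, (∀ x ∈ l, g • x = x) → g = 1} := by
          refine ⟨[a], rfl, by simpa using ha0, ?_⟩
          intro g hg hfixa
          have hga : g • a = a := hfixa a (List.mem_singleton.mpr rfl)
          have hgb : g • b = b := hfix g hg hga
          refine hl2triv g hg ?_
          intro x hx
          rcases List.mem_cons.mp hx with rfl | hx
          · exact hga
          · rcases List.mem_singleton.mp hx with rfl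
            exact hgb
        have := hBge 1 h1
        omega
  -- irredundant pairs have trivial pointwise stabilizer
  have hpair : ∀ x y : V, x ≠ 0 → y ≠ 0 → (∃ g ∈ G, g • x = x ∧ g • y ≠ y) →
      ∀ g ∈ G, g • x = x → g • y = y → g = 1 := by
    intro x y hx hy hmv
    by_contra hc
    push_neg at hc
    obtain ⟨h, hhG, hhx, hhy, hh1⟩ := hc
    obtain ⟨g1, hg1G, hg1x, hg1y⟩ := hmv
    have hirred : IsIrredundantOn G {v : V | v ≠ 0} [x, y] := by
      refine ⟨?_, ?_⟩
      · intro z hz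
        rcases List.mem_cons.mp hz with rfl | hz
        · exact hx
        · rcases List.mem_singleton.mp hz with rfl
          exact hy
      · intro i hi
        simp only [List.length_cons, List.length_nil] at hi
        interval_cases i
        · obtain ⟨g, hgG, hgmove⟩ := hmove x hx
          exact ⟨g, hgG, by simp, by simpa using hgmove⟩
        · exact ⟨g1, hg1G, by simpa using hg1x, by simpa using hg1y⟩
    obtain ⟨l', hpre, hbase'⟩ := exists_extension G [x, y] hirred
    have hlen' : l'.length = 2 := hIBIS l' [a, b] hbase' hbase2
    have hl'eq : l' = [x, y] := (hpre.eq_of_length (by simp [hlen'])).symm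
    subst hl'eq
    refine hh1 (hbase'.2 h hhG ?_)
    intro z hz
    rcases List.mem_cons.mp hz with rfl | hz
    · exact hhx
    · rcases List.mem_singleton.mp hz with rfl
      exact hhy
  -- stabilizer dichotomy
  have hdich : ∀ x y : V, x ≠ 0 → y ≠ 0 →
      (∀ g ∈ G, g • x = x → g • y = y → g = 1) ∨ (∀ g ∈ G, (g • x = x ↔ g • y = y)) := by
    intro x y hx hy
    by_cases c1 : ∃ g ∈ G, g • x = x ∧ g • y ≠ y
    · exact Or.inl (hpair x y hx hy c1)
    by_cases c2 : ∃ g ∈ G, g • y = y ∧ g • x ≠ x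
    · exact Or.inl fun g hg hgx hgy => hpair y x hy hx c2 g hg hgy hgx
    push_neg at c1 c2
    exact Or.inr fun g hg => ⟨fun h => c1 g hg h, fun h => c2 g hg h⟩
  -- main case distinction
  by_cases hcase : ∃ j, j ≠ i₀ ∧ ∃ w ∈ W j, w ≠ 0 ∧
      (∀ g ∈ G, g • u = u → g • w = w → g = 1) ∧
      (∀ g ∈ G, g • v = v → g • w = w → g = 1)
  · obtain ⟨j, hji, w, hwj, hw0, htu, htv⟩ := hcase
    have hi₀j : i₀ ≠ j := fun h => hji h.symm
    have huw0 : u + w ≠ 0 := by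
      intro h
      have : u = -w := eq_neg_of_add_eq_zero_left h
      exact hu0 (hdisj i₀ j hi₀j u hu (this ▸ neg_mem hwj))
    have hvw0 : v + w ≠ 0 := by
      intro h
      have : v = -w := eq_neg_of_add_eq_zero_left h
      exact hv0 (hdisj i₀ j hi₀j v hv (this ▸ neg_mem hwj))
    obtain ⟨g, hgG, hg1, hgfix⟩ := hstab1 (u + w) huw0
    obtain ⟨hgu, hgw⟩ := swap_lemma G W hind hperm hi₀j hu hu0 hwj hw0 htu g hgG hg1 hgfix
    obtain ⟨g', hg'G, hg'1, hg'fix⟩ := hstab1 (v + w) hvw0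
    obtain ⟨hg'v, hg'w⟩ := swap_lemma G W hind hperm hi₀j hv hv0 hwj hw0 htv g' hg'G hg'1 hg'fix
    refine ⟨g'⁻¹ * g, mul_mem (inv_mem hg'G) hgG, ?_, ?_⟩
    · obtain ⟨c, hcmap⟩ := hperm (g'⁻¹ * g) (mul_mem (inv_mem hg'G) hgG) i₀
      have hval : (g'⁻¹ * g) • u = v := by
        rw [mul_smul, hgu, ← hg'v, inv_smul_smul]
      have hvWc : v ∈ W c := by
        rw [← hcmap]
        exact ⟨u, hu, hval⟩
      have hci : c = i₀ := by
        by_contra hc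
        exact hv0 (hdisj c i₀ hc v hvWc hv)
      rw [hcmap, hci]
    · rw [mul_smul, hgu, ← hg'v, inv_smul_smul]
  · exfalso
    -- for every w in another block, its stabilizer coincides with that of u or of v
    have halt : ∀ j, j ≠ i₀ → ∀ w ∈ W j, w ≠ 0 →
        (∀ g ∈ G, (g • u = u ↔ g • w = w)) ∨ (∀ g ∈ G, (g • v = v ↔ g • w = w)) := by
      intro j hji w hwj hw0
      have hnand : ¬((∀ g ∈ G, g • u = u → g • w = w → g = 1) ∧
          (∀ g ∈ G, g • v = v → g • w = w → g = 1)) := by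
        intro hAB
        exact hcase ⟨j, hji, w, hwj, hw0, hAB.1, hAB.2⟩
      rcases not_and_or.mp hnand with hA | hB
      · rcases hdich u w hu0 hw0 with h | h
        · exact absurd h hA
        · exact Or.inl h
      · rcases hdich v w hv0 hw0 with h | h
        · exact absurd h hB
        · exact Or.inr h
    -- pick a block distinct from i₀
    have hj : ∃ j : Fin n, j ≠ i₀ := by
      by_cases h : i₀ = ⟨0, by omega⟩
      · refine ⟨⟨1, by omega⟩, ?_⟩
        rw [h]
        intro hh
        exact absurd (congrArg Fin.val hh) (by simp)
      · exact ⟨⟨0, by omega⟩, fun hh => h hh.symm⟩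
    obtain ⟨j, hji⟩ := hj
    -- W j is contained in the fixed space of the stabilizer of u or of v
    have hunion : (∀ w ∈ W j, ∀ g ∈ G, g • u = u → g • w = w) ∨
        (∀ w ∈ W j, ∀ g ∈ G, g • v = v → g • w = w) := by
      by_contra hcc
      push_neg at hcc
      obtain ⟨⟨w₁, hw₁j, g₁, hg₁G, hg₁u, hg₁w⟩, ⟨w₂, hw₂j, g₂, hg₂G, hg₂v, hg₂w⟩⟩ := hcc
      have hmemAB : ∀ w ∈ W j, (∀ g ∈ G, g • u = u → g • w = w) ∨
          (∀ g ∈ G, g • v = v → g • w = w) := by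
        intro w hw
        by_cases hw0 : w = 0
        · exact Or.inl fun g _ _ => by rw [hw0, smul_zero]
        rcases halt j hji w hw hw0 with h | h
        · exact Or.inl fun g hg hgu => (h g hg).mp hgu
        · exact Or.inr fun g hg hgv => (h g hg).mp hgv
      have hw₁B : ∀ g ∈ G, g • v = v → g • w₁ = w₁ := by
        rcases hmemAB w₁ hw₁j with h | h
        · exact absurd (h g₁ hg₁G hg₁u) hg₁w
        · exact h
      have hw₂A : ∀ g ∈ G, g • u = u → g • w₂ = w₂ := by
        rcases hmemAB w₂ hw₂j with h | h
        · exact h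
        · exact absurd (h g₂ hg₂G hg₂v) hg₂w
      rcases hmemAB (w₁ + w₂) (add_mem hw₁j hw₂j) with h | h
      · -- then w₁ = (w₁ + w₂) - w₂ is fixed by the stabilizer of u: contradiction
        apply hg₁w
        have h1 : g₁ • (w₁ + w₂) = w₁ + w₂ := h g₁ hg₁G hg₁u
        have h2 : g₁ • w₂ = w₂ := hw₂A g₁ hg₁G hg₁u
        have := h1
        rw [smul_add, h2] at this
        exact add_right_cancel this
      · apply hg₂w
        have h1 : g₂ • (w₁ + w₂) = w₁ + w₂ := h g₂ hg₂G hg₂v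
        have h2 : g₂ • w₁ = w₁ := hw₁B g₂ hg₂G hg₂v
        have := h1
        rw [smul_add, h2] at this
        exact add_left_cancel this
    -- the key contradiction
    have key : ∀ x : V, x ∈ W i₀ → x ≠ 0 →
        (∀ w ∈ W j, ∀ g ∈ G, g • x = x → g • w = w) → False := by
      intro x hx hx0 hfixall
      have hequiv : ∀ w ∈ W j, w ≠ 0 → ∀ g ∈ G, (g • x = x ↔ g • w = w) := by
        intro w hw hw0
        rcases hdich x w hx0 hw0 with htr | heq
        · exfalso
          obtain ⟨g₀, hg₀G, hg₀1, hg₀x⟩ := hstab1 x hx0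
          exact hg₀1 (htr g₀ hg₀G hg₀x (hfixall w hw g₀ hg₀G hg₀x))
        · exact heq
      obtain ⟨t, htG, htmap⟩ := htrans j i₀
      have hWi₀ : ∀ y, y ∈ W i₀ → y ≠ 0 → ∀ g ∈ G, (g • y = y ↔ (t⁻¹ * g * t) • x = x) := by
        intro y hy hy0 g hg
        have : y ∈ (W j).map (t : V →ₗ[F] V) := htmap ▸ hy
        obtain ⟨w, hwj, htw⟩ := this
        have htw' : t • w = y := htw
        have hw0 : w ≠ 0 := by
          rintro rfl
          exact hy0 (by rw [← htw', smul_zero])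
        have hG' : (t⁻¹ * g * t) ∈ G := mul_mem (mul_mem (inv_mem htG) hg) htG
        have h1 : (t⁻¹ * g * t) • w = w ↔ g • y = y := by
          rw [mul_smul, mul_smul, htw', inv_smul_eq_iff, htw']
        exact (h1.symm).trans (hequiv w hwj hw0 (t⁻¹ * g * t) hG').symm
      have hyx : ∀ y, y ∈ W i₀ → y ≠ 0 → ∀ g ∈ G, (g • y = y ↔ g • x = x) := by
        intro y hy hy0 g hg
        exact (hWi₀ y hy hy0 g hg).trans (hWi₀ x hx hx0 g hg).symm
      have hux : ∀ g ∈ G, (g • u = u ↔ g • x = x) := hyx u hu hu0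
      have hvx : ∀ g ∈ G, (g • v = v ↔ g • x = x) := hyx v hv hv0
      obtain ⟨g₀, hg₀G, hg₀1, hg₀x⟩ := hstab1 x hx0
      have hfixW : ∀ k, ∀ w ∈ W k, g₀ • w = w := by
        intro k w hw
        by_cases hw0 : w = 0
        · rw [hw0, smul_zero]
        by_cases hki : k = i₀
        · exact (hyx w (hki ▸ hw) hw0 g₀ hg₀G).mpr hg₀x
        · rcases halt k hki w hw hw0 with h | h
          · exact (h g₀ hg₀G).mp ((hux g₀ hg₀G).mpr hg₀x)
          · exact (h g₀ hg₀G).mp ((hvx g₀ hg₀G).mpr hg₀x)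
      let U₀ : Submodule F V :=
        { carrier := {y | g₀ • y = y}
          add_mem' := fun {y z} hy hz => by
            show g₀ • (y + z) = y + z
            rw [smul_add, hy, hz]
          zero_mem' := smul_zero g₀
          smul_mem' := fun c y hy => by
            show g₀ • (c • y) = c • y
            have : g₀ • (c • y) = c • (g₀ • y) := by
              show g₀ (c • y) = c • (g₀ y)
              exact map_smul g₀ c y
            rw [this, hy] }
      have hle : ∀ k, W k ≤ U₀ := fun k w hw => hfixW k w hw
      have htop : (⊤ : Submodule F V) ≤ U₀ := by
        rw [← hint.submodule_iSup_eq_top]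
        exact iSup_le hle
      exact hg₀1 (linEquiv_eq_one g₀ fun y => htop Submodule.mem_top)
    rcases hunion with h | h
    · exact key u hu hu0 h
    · exact key v hv hv0 h
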